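/- For all positive integers m and n, the infinite series sum over i >= 1 of 1/(L_{2m(i-1)+n} * L_{2m(i+1)+n}) converges to (1/(5 * F_n * F_{4m})) * (2/L_n + L_{2m}/L_{2m+n} - 2/Φ^n), where Φ = (1+√5)/2. -/

import Mathlib

def lucas : ℕ → ℕ
  | 0 => 2
  | 1 => 1
  | n + 2 => lucas (n + 1) + lucas n

/-!
Put `w a = (φ ^ a L_a)⁻¹`. Because `φ ψ = -1`, for even `d` one has
`w a - w (a + d) = √5 F_d / (L_a L_{a+d})`; with `d = 4m` the series therefore telescopes with
step two, to `(w n + w (2m + n)) / (√5 F_{4m})`. The closed form agrees with this value because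
`L_{2k} / L_{2k+n} - φ⁻ⁿ = √5 F_n w (2k + n)` for every `k`, used with `k = 0` and `k = m`.
-/

open Real goldenRatio Filter Topology

theorem coe_lucas_eq (k : ℕ) : (lucas k : ℝ) = φ ^ k + ψ ^ k := by
  induction k using Nat.twoStepInduction with
  | zero => norm_num [lucas]
  | one => simp only [lucas, Nat.cast_one, pow_one, goldenRatio_add_goldenConj]
  | more k ih₁ ih₂ =>
    have hx := goldenRatio_sq
    have hy := goldenConj_sq
    rw [lucas, Nat.cast_add, ih₁, ih₂]
    -- `φ` is a reducible abbreviation, which `ring` would unfold into `(1 + √5) / 2`.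
    generalize φ = x at hx ⊢
    generalize ψ = y at hy ⊢
    linear_combination -(x ^ k * hx + y ^ k * hy)

theorem lucas_pos (k : ℕ) : 0 < lucas k := by
  induction k using Nat.twoStepInduction with
  | zero => decide
  | one => decide
  | more k ih₁ _ => rw [lucas]; omega

theorem sqrt_five_mul_fib (n : ℕ) : √5 * Nat.fib n = φ ^ n - ψ ^ n := by
  rw [coe_fib_eq]
  field_simp

theorem goldenRatio_pow_mul_goldenConj_pow_even (k : ℕ) : φ ^ (2 * k) * ψ ^ (2 * k) = 1 := by
  rw [← mul_pow, pow_mul, goldenRatio_mul_goldenConj]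
  norm_num

theorem goldenRatio_pow_mul_lucas_add_sub (a k : ℕ) :
    φ ^ (a + 2 * k) * lucas (a + 2 * k) - φ ^ a * lucas a
      = √5 * Nat.fib (2 * k) * φ ^ (2 * a + 2 * k) := by
  have h := goldenRatio_pow_mul_goldenConj_pow_even k
  rw [coe_lucas_eq, coe_lucas_eq, sqrt_five_mul_fib]
  generalize φ = x at h ⊢
  generalize ψ = y at h ⊢
  linear_combination ((x * y) ^ a + x ^ (2 * a)) * h

theorem goldenRatio_pow_mul_lucas_sub (k n : ℕ) :
    φ ^ (2 * k + n) * lucas (2 * k) - φ ^ (2 * k) * lucas (2 * k + n) = √5 * Nat.fib n := by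
  have h := goldenRatio_pow_mul_goldenConj_pow_even k
  rw [coe_lucas_eq, coe_lucas_eq, sqrt_five_mul_fib]
  generalize φ = x at h ⊢
  generalize ψ = y at h ⊢
  linear_combination (x ^ n - y ^ n) * h

noncomputable def invGoldenLucas (a : ℕ) : ℝ := (φ ^ a * lucas a)⁻¹

theorem invGoldenLucas_sub_invGoldenLucas_add (a k : ℕ) :
    invGoldenLucas a - invGoldenLucas (a + 2 * k)
      = √5 * Nat.fib (2 * k) / (lucas a * lucas (a + 2 * k)) := by
  have hLa : (lucas a : ℝ) ≠ 0 := by exact_mod_cast (lucas_pos a).ne'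
  have hLb : (lucas (a + 2 * k) : ℝ) ≠ 0 := by exact_mod_cast (lucas_pos _).ne'
  have hφ : ∀ j, φ ^ j ≠ 0 := fun j => pow_ne_zero j goldenRatio_ne_zero
  have key := goldenRatio_pow_mul_lucas_add_sub a k
  rw [show 2 * a + 2 * k = a + (a + 2 * k) by ring, pow_add] at key
  unfold invGoldenLucas
  field_simp [hφ]
  linear_combination key

theorem lucas_div_lucas_add_sub_inv_pow (k n : ℕ) :
    (lucas (2 * k) : ℝ) / lucas (2 * k + n) - (φ ^ n)⁻¹
      = √5 * Nat.fib n * invGoldenLucas (2 * k + n) := by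
  have hL : (lucas (2 * k + n) : ℝ) ≠ 0 := by exact_mod_cast (lucas_pos _).ne'
  have hφ : ∀ j, φ ^ j ≠ 0 := fun j => pow_ne_zero j goldenRatio_ne_zero
  have key := goldenRatio_pow_mul_lucas_sub k n
  rw [pow_add] at key
  unfold invGoldenLucas
  field_simp [hφ]
  rw [pow_add]
  generalize φ = x at key ⊢
  linear_combination x ^ n * key

theorem tendsto_invGoldenLucas_atTop : Tendsto invGoldenLucas atTop (𝓝 0) := by
  have hφ : Tendsto (fun a : ℕ => φ ^ a) atTop atTop :=
    tendsto_pow_atTop_atTop_of_one_lt one_lt_goldenRatio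
  refine Tendsto.inv_tendsto_atTop (tendsto_atTop_mono (fun a => ?_) hφ)
  have hL : (1 : ℝ) ≤ lucas a := by exact_mod_cast lucas_pos a
  exact le_mul_of_one_le_right (pow_pos goldenRatio_pos a).le hL

theorem hasSum_of_eq_sub_add_two {f g : ℕ → ℝ} (hf : ∀ i, 0 ≤ f i)
    (hfg : ∀ i, f i = g i - g (i + 2)) (hg : Tendsto g atTop (𝓝 0)) :
    HasSum f (g 0 + g 1) := by
  have hsum : ∀ N, ∑ i ∈ Finset.range N, f i = (g 0 + g 1) - (g N + g (N + 1)) := fun N => by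
    rw [← Finset.sum_range_sub' (fun i => g i + g (i + 1))]
    exact Finset.sum_congr rfl fun i _ => by rw [hfg]; ring
  rw [hasSum_iff_tendsto_nat_of_nonneg hf, funext hsum]
  simpa using tendsto_const_nhds.sub (hg.add (hg.comp (tendsto_add_atTop_nat 1)))

theorem stmt_11 (m n : ℕ) (hm : 0 < m) (hn : 0 < n) :
    HasSum (fun i : ℕ =>
      1 / ((lucas (2 * m * i + n) : ℝ) * (lucas (2 * m * (i + 2) + n) : ℝ)))
      ((1 / (5 * (Nat.fib n : ℝ) * (Nat.fib (4 * m) : ℝ))) *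
        (2 / (lucas n : ℝ) + (lucas (2 * m) : ℝ) / (lucas (2 * m + n) : ℝ)
          - 2 / ((1 + Real.sqrt 5) / 2) ^ n)) := by
  set c : ℝ := √5 * Nat.fib (4 * m)
  have hc : c ≠ 0 :=
    mul_ne_zero (by positivity) (by exact_mod_cast (Nat.fib_pos.2 (by omega)).ne')
  have hFn : (Nat.fib n : ℝ) ≠ 0 := by exact_mod_cast (Nat.fib_pos.2 hn).ne'
  set g : ℕ → ℝ := fun i => invGoldenLucas (2 * m * i + n) / c
  have hterm : ∀ i, 1 / ((lucas (2 * m * i + n) : ℝ) * lucas (2 * m * (i + 2) + n))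
      = g i - g (i + 2) := fun i => by
    have h := invGoldenLucas_sub_invGoldenLucas_add (2 * m * i + n) (2 * m)
    rw [show 2 * m * i + n + 2 * (2 * m) = 2 * m * (i + 2) + n by ring,
      show 2 * (2 * m) = 4 * m by ring] at h
    simp only [g, c, ← sub_div, h]
    field_simp
  have hindex : Tendsto (fun i : ℕ => 2 * m * i + n) atTop atTop :=
    tendsto_atTop_mono (fun i => le_add_right (Nat.le_mul_of_pos_left i (by omega))) tendsto_id
  have hg : Tendsto g atTop (𝓝 0) := by
    simpa using (tendsto_invGoldenLucas_atTop.comp hindex).div_const c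
  have hvalue : 2 / (lucas n : ℝ) + (lucas (2 * m) : ℝ) / lucas (2 * m + n) - 2 / φ ^ n
      = √5 * Nat.fib n * (invGoldenLucas n + invGoldenLucas (2 * m + n)) := by
    have h₀ := lucas_div_lucas_add_sub_inv_pow 0 n
    simp only [mul_zero, zero_add, lucas, Nat.cast_ofNat] at h₀
    linear_combination h₀ + lucas_div_lucas_add_sub_inv_pow m n
  convert hasSum_of_eq_sub_add_two (fun i => by positivity) hterm hg using 1
  simp only [g, mul_zero, zero_add, mul_one, hvalue, c]
  field_simp
  norm_num
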